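/- arXiv:2404.10151 — 2 statements merged into one kernel-verified Lean document; each statement's English description precedes it below -/
import Mathlib

section
/- Same-parent insertion ordering (paper's Lemma on concurrent InsertAfter at the same node): Suppose i, j ∈ {1, …, k} with i < j and p i = p j = a, i.e., both i and j were inserted directly at the same parent a, with i inserted first (hence i has the lower timestamp). Then in the final list L k the element j occurs strictly between a and i; in particular the node inserted first lies farther away from the common parent, and the node inserted later, which has the higher timestamp, lies closer to it. -/
/-- Insert `x` immediately after the (first) occurrence of `a` in the list. -/
def insertAfter (a x : ℕ) : List ℕ → List ℕ
  | [] => []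
  | b :: t => if b = a then b :: x :: t else b :: insertAfter a x t

/-- The sequential construction: `L 0 = [0]`, `L (i+1) = insertAfter (p (i+1)) (i+1) (L i)`. -/
def buildL (p : ℕ → ℕ) : ℕ → List ℕ
  | 0 => [0]
  | i + 1 => insertAfter (p (i + 1)) (i + 1) (buildL p i)

/-- Insert `x` into a list by timestamp: skip all elements greater than `x`,
and insert `x` before the first element smaller (or equal), or at the end. -/
def insertByTS (x : ℕ) : List ℕ → List ℕ
  | [] => [x]
  | b :: t => if x < b then b :: insertByTS x t else x :: b :: t

/-- The timestamp-guided replay insertion: scan right from the occurrence of `a`,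
skip all elements with timestamp greater than `x`, and insert `x` before the
first element with smaller timestamp (or at the end). -/
def replayInsert (a x : ℕ) : List ℕ → List ℕ
  | [] => []
  | b :: t => if b = a then b :: insertByTS x t else b :: replayInsert a x t

/-- `buildSet p S` performs the insertion events of `S` in increasing order of
timestamp, starting from `[0]`. -/
def buildSet (p : ℕ → ℕ) (S : Finset ℕ) : List ℕ :=
  (S.sort (· ≤ ·)).foldl (fun M i => insertAfter (p i) i M) [0]

/-- `i` is an ancestor of `j` (equivalently `j` a descendant of `i`): iterating the
parent map `p` (extended by `p 0 = 0`) starting from `j` reaches `i`. -/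
def isAncestor (p : ℕ → ℕ) (i j : ℕ) : Prop :=
  ∃ n : ℕ, (fun m => if m = 0 then 0 else p m)^[n] j = i

/-!
Inserting `x` right after `a` keeps every earlier element in place relative to the others, so
each list `L m` is a sublist of every later `L n`. When `i` is inserted, it lands right after its
parent `a`, so `[a, i]` is a sublist of `L i` and hence of `L (j - 1)`; inserting `j` right after
the (unique) occurrence of `a` then makes `[a, j, i]` a sublist of `L j`, hence of `L k`. Since
`L k` is a permutation of `0, …, k`, it has no duplicates and sublist order is index order.
-/

open scoped List

theorem List.Nodup.idxOf_lt_idxOf_of_pair_sublist {α : Type*} [BEq α] [LawfulBEq α]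
    {l : List α} {a b : α} (hl : l.Nodup) (h : [a, b] <+ l) : l.idxOf a < l.idxOf b := by
  induction l with
  | nil => simp at h
  | cons c t ih =>
    by_cases hca : c = a
    · subst hca
      have hbt : b ∈ t := List.singleton_sublist.1 (List.cons_sublist_cons.1 h)
      have hcb : c ≠ b := fun hcb => (List.nodup_cons.1 hl).1 (hcb ▸ hbt)
      rw [List.idxOf_cons_self, List.idxOf_cons_ne t hcb]
      exact Nat.succ_pos _
    · have hsub : [a, b] <+ t := by
        simpa [hca, Ne.symm hca] using List.sublist_cons_iff.1 h
      have hcb : c ≠ b := fun hcb => (List.nodup_cons.1 hl).1 (hcb ▸ hsub.subset (by simp))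
      rw [List.idxOf_cons_ne t hca, List.idxOf_cons_ne t hcb]
      exact Nat.succ_lt_succ (ih (List.nodup_cons.1 hl).2 hsub)

theorem sublist_insertAfter (a x : ℕ) (M : List ℕ) : M <+ insertAfter a x M := by
  induction M with
  | nil => exact List.Sublist.slnil
  | cons c t ih =>
    unfold insertAfter
    split_ifs
    · exact (List.sublist_cons_self x t).cons_cons c
    · exact ih.cons_cons c

theorem cons_sublist_insertAfter {a x : ℕ} {l M : List ℕ} (h : a :: l <+ M) :
    a :: x :: l <+ insertAfter a x M := by
  induction M with
  | nil => simp at h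
  | cons c t ih =>
    unfold insertAfter
    split_ifs with hca
    · subst hca
      exact (List.cons_sublist_cons.1 h).cons_cons x |>.cons_cons c
    · have ht : a :: l <+ t := by
        simpa [Ne.symm hca] using List.sublist_cons_iff.1 h
      exact (ih ht).cons c

theorem insertAfter_perm {a : ℕ} (x : ℕ) {M : List ℕ} (ha : a ∈ M) :
    insertAfter a x M ~ x :: M := by
  induction M with
  | nil => simp at ha
  | cons c t ih =>
    unfold insertAfter
    split_ifs with hca
    · exact List.Perm.swap x c t
    · have hat : a ∈ t := (List.mem_cons.1 ha).resolve_left (Ne.symm hca)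
      exact ((ih hat).cons c).trans (List.Perm.swap x c t)

section buildL

variable {p : ℕ → ℕ}

theorem buildL_of_pos {n : ℕ} (hn : 0 < n) :
    buildL p n = insertAfter (p n) n (buildL p (n - 1)) := by
  obtain ⟨m, rfl⟩ := Nat.exists_eq_add_of_lt hn
  rfl

theorem buildL_sublist_buildL {m n : ℕ} (hmn : m ≤ n) : buildL p m <+ buildL p n := by
  induction n, hmn using Nat.le_induction with
  | base => exact List.Sublist.refl _
  | succ n _ ih => exact ih.trans (sublist_insertAfter _ _ _)

theorem buildL_perm_range {n : ℕ} (hp : ∀ i, 1 ≤ i → i ≤ n → p i < i) :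
    buildL p n ~ List.range (n + 1) := by
  induction n with
  | zero => rfl
  | succ n ih =>
    have ih := ih fun i h1 h2 => hp i h1 (by omega)
    have hpar : p (n + 1) ∈ buildL p n :=
      ih.mem_iff.2 (List.mem_range.2 (hp (n + 1) le_add_self le_rfl))
    calc buildL p (n + 1) ~ (n + 1) :: buildL p n := insertAfter_perm _ hpar
      _ ~ (n + 1) :: List.range (n + 1) := ih.cons _
      _ ~ List.range (n + 2) := by
        rw [List.range_succ (n := n + 1)]
        exact (List.perm_append_singleton _ _).symm

theorem pair_sublist_buildL {n : ℕ} (hp : ∀ i, 1 ≤ i → i ≤ n → p i < i) (hn : 1 ≤ n) :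
    [p n, n] <+ buildL p n := by
  have hpar : p n ∈ buildL p (n - 1) :=
    (buildL_perm_range fun i h1 h2 => hp i h1 (by omega)).mem_iff.2
      (List.mem_range.2 (by have := hp n hn le_rfl; omega))
  rw [buildL_of_pos hn]
  exact cons_sublist_insertAfter (List.singleton_sublist.2 hpar)

end buildL

/-- Same-parent insertion ordering: if `i < j` were both inserted at the same
parent `p i = p j`, then in the final list `L k` the later (higher-timestamp)
node `j` occurs strictly between the common parent and `i`. -/
theorem same_parent_order
    (k : ℕ) (p : ℕ → ℕ) (hp : ∀ i, 1 ≤ i → i ≤ k → p i < i)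
    (i j : ℕ) (hi : 1 ≤ i) (hij : i < j) (hj : j ≤ k) (hpar : p i = p j) :
    (buildL p k).idxOf (p i) < (buildL p k).idxOf j ∧
      (buildL p k).idxOf j < (buildL p k).idxOf i := by
  have hi_before : [p i, i] <+ buildL p (j - 1) :=
    (pair_sublist_buildL (fun m h1 h2 => hp m h1 (by omega)) hi).trans
      (buildL_sublist_buildL (by omega))
  have hj_between : [p i, j, i] <+ buildL p k := by
    refine List.Sublist.trans ?_ (buildL_sublist_buildL hj)
    rw [buildL_of_pos (by omega), ← hpar]
    exact cons_sublist_insertAfter hi_before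
  have hnodup : (buildL p k).Nodup := (buildL_perm_range hp).nodup_iff.2 List.nodup_range
  exact ⟨hnodup.idxOf_lt_idxOf_of_pair_sublist (.trans (by simp) hj_between),
    hnodup.idxOf_lt_idxOf_of_pair_sublist (.trans (by simp) hj_between)⟩
end

section
/- Replay placement when the successor has a larger timestamp (paper's Lemma: 'if A→B with A.ts < B.ts, then ReplicateInsertAfter(A,C) must scan from A for the first node D with D.ts < C.ts and insert C just before D'): Let S ⊆ {1, …, k} be parent-closed, let a ∈ S ∪ {0}, let x ∈ {1, …, k} with x ∉ S and p x = a, and suppose the element immediately following a in build S is greater than a. Write the portion of build S strictly after a as v, and let v₁ be the longest prefix of v all of whose entries are greater than x. Then in build (S ∪ {x}) the element x occurs immediately after the block a :: v₁: if v₁ ≠ v, x is immediately before the first element of v that is smaller than x, and otherwise x is the last element of the list. -/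
/-!
Inserting the events of `S ∪ {x}` in timestamp order, every event `m > x` is an `insertAfter`
whose anchor is not `x`, and such an insertion commutes with the timestamp-guided replay of `x`:
wherever `m` lands, the scan for the position of `x` skips it because `m > x`.
Peeling off the events of `S` later than `x` one at a time therefore shows that
`build (S ∪ {x})` is the replay of `x` on `build S`; when all events precede `x`, every entry of
the list is at most `x`, the scan stops at once and the replay is the plain `insertAfter`.
The replay result is read off the split of `build S` at the unique occurrence of `a`.
-/

theorem insertByTS_eq_takeWhile_append_dropWhile (x : ℕ) : ∀ l : List ℕ,
    insertByTS x l = l.takeWhile (fun b => x < b) ++ x :: l.dropWhile (fun b => x < b)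
  | [] => rfl
  | b :: t => by
    by_cases h : x < b
    · simp [insertByTS, h, insertByTS_eq_takeWhile_append_dropWhile x t]
    · simp [insertByTS, h]

theorem insertByTS_insertAfter_comm {x q m : ℕ} (hqx : q ≠ x) (hxm : x < m) :
    ∀ l : List ℕ, insertByTS x (insertAfter q m l) = insertAfter q m (insertByTS x l)
  | [] => by simp [insertAfter, insertByTS, hqx.symm]
  | b :: t => by
    by_cases hbq : b = q
    · subst hbq
      by_cases hxb : x < b <;> simp [insertAfter, insertByTS, hxb, hxm, hqx.symm]
    · by_cases hxb : x < b <;>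
        simp [insertAfter, insertByTS, hbq, hxb, hqx.symm, insertByTS_insertAfter_comm hqx hxm t]

theorem replayInsert_insertAfter_comm {a x q m : ℕ} (ham : a ≠ m) (hqx : q ≠ x) (hxm : x < m) :
    ∀ l : List ℕ, replayInsert a x (insertAfter q m l) = insertAfter q m (replayInsert a x l)
  | [] => rfl
  | b :: t => by
    by_cases hbq : b = q <;> by_cases hba : b = a
    · subst hbq hba
      simp [insertAfter, replayInsert, insertByTS, hxm]
    · subst hbq
      simp [insertAfter, replayInsert, hba, ham.symm]
    · subst hba
      simp [insertAfter, replayInsert, hbq, insertByTS_insertAfter_comm hqx hxm t]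
    · simp [insertAfter, replayInsert, hbq, hba, replayInsert_insertAfter_comm ham hqx hxm t]

theorem replayInsert_eq_insertAfter {a x : ℕ} :
    ∀ {l : List ℕ}, (∀ b ∈ l, b ≤ x) → replayInsert a x l = insertAfter a x l
  | [], _ => rfl
  | b :: t, h => by
    have ht : insertByTS x t = x :: t := by
      cases t with
      | nil => rfl
      | cons c t' => simp [insertByTS, h c (by simp)]
    by_cases hba : b = a
    · simp [replayInsert, insertAfter, hba, ht]
    · simp [replayInsert, insertAfter, hba,
        replayInsert_eq_insertAfter (fun b hb => h b (List.mem_cons_of_mem _ hb))]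

theorem replayInsert_append_cons {a x : ℕ} {u : List ℕ} (w : List ℕ) (h : a ∉ u) :
    replayInsert a x (u ++ a :: w) = u ++ a :: insertByTS x w := by
  induction u with
  | nil => simp [replayInsert]
  | cons b u ih =>
    simp only [List.mem_cons, not_or] at h
    simp [replayInsert, Ne.symm h.1, ih h.2]

theorem perm_insertAfter {a : ℕ} (x : ℕ) :
    ∀ {l : List ℕ}, a ∈ l → (insertAfter a x l).Perm (x :: l)
  | b :: t, h => by
    by_cases hba : b = a
    · simpa [insertAfter, hba] using List.Perm.swap x a t
    · have ha : a ∈ t := by simpa [Ne.symm hba] using h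
      simpa [insertAfter, hba] using ((perm_insertAfter x ha).cons b).trans (List.Perm.swap x b t)

theorem Finset.sort_insert_of_forall_lt {α : Type*} [LinearOrder α] {s : Finset α} {m : α}
    (h : ∀ b ∈ s, b < m) :
    (insert m s).sort (· ≤ ·) = s.sort (· ≤ ·) ++ [m] := by
  refine (Finset.sortedLT_sort _).eq_of_mem_iff ?_ fun b => by simp [or_comm]
  rw [List.sortedLT_iff_pairwise, List.pairwise_append]
  exact ⟨(Finset.sortedLT_sort s).pairwise, by simp, by simpa using h⟩

theorem buildSet_insert_of_forall_lt (p : ℕ → ℕ) {S : Finset ℕ} {m : ℕ} (h : ∀ b ∈ S, b < m) :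
    buildSet p (insert m S) = insertAfter (p m) m (buildSet p S) := by
  simp [buildSet, Finset.sort_insert_of_forall_lt h]

section buildSet

variable {p : ℕ → ℕ}

theorem parent_eq_zero_or_mem_of_insert_max {S : Finset ℕ} {m : ℕ} (hmax : ∀ b ∈ S, b < m)
    (hlt : ∀ i ∈ insert m S, p i < i) (hcl : ∀ i ∈ insert m S, p i = 0 ∨ p i ∈ insert m S) :
    ∀ i ∈ insert m S, p i = 0 ∨ p i ∈ S := by
  intro i hi
  refine (hcl i hi).imp_right fun hpi => (Finset.mem_insert.1 hpi).resolve_left ?_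
  have him : i ≤ m := by
    rcases Finset.mem_insert.1 hi with rfl | hi
    · exact le_rfl
    · exact (hmax i hi).le
  have := hlt i hi
  omega

open List in
theorem buildSet_perm {S : Finset ℕ} (hlt : ∀ i ∈ S, p i < i)
    (hcl : ∀ i ∈ S, p i = 0 ∨ p i ∈ S) : (buildSet p S).Perm (0 :: S.toList) := by
  induction S using Finset.induction_on_max with
  | empty => simp [buildSet]
  | insert m S hmax ih =>
    have hcl' := parent_eq_zero_or_mem_of_insert_max hmax hlt hcl
    have ih := ih (fun i hi => hlt i (Finset.mem_insert_of_mem hi))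
      (fun i hi => hcl' i (Finset.mem_insert_of_mem hi))
    have hpm : p m ∈ buildSet p S :=
      ih.mem_iff.2 (by simpa using hcl' m (Finset.mem_insert_self m S))
    rw [buildSet_insert_of_forall_lt p hmax]
    calc insertAfter (p m) m (buildSet p S)
        _ ~ m :: buildSet p S := perm_insertAfter m hpm
        _ ~ m :: 0 :: S.toList := ih.cons m
        _ ~ 0 :: m :: S.toList := List.Perm.swap 0 m _
        _ ~ 0 :: (insert m S).toList :=
          ((Finset.toList_insert fun h => lt_irrefl m (hmax m h)).symm).cons 0

theorem mem_buildSet {S : Finset ℕ} (hlt : ∀ i ∈ S, p i < i)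
    (hcl : ∀ i ∈ S, p i = 0 ∨ p i ∈ S) {b : ℕ} : b ∈ buildSet p S ↔ b = 0 ∨ b ∈ S := by
  simp [(buildSet_perm hlt hcl).mem_iff]

theorem nodup_buildSet {S : Finset ℕ} (hlt : ∀ i ∈ S, p i < i)
    (hcl : ∀ i ∈ S, p i = 0 ∨ p i ∈ S) : (buildSet p S).Nodup :=
  (buildSet_perm hlt hcl).nodup_iff.2 <|
    List.nodup_cons.2 ⟨by simpa using fun h => Nat.not_lt_zero _ (hlt 0 h), S.nodup_toList⟩

theorem buildSet_insert_eq_replayInsert_of_forall_lt {S : Finset ℕ} (hlt : ∀ i ∈ S, p i < i)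
    (hcl : ∀ i ∈ S, p i = 0 ∨ p i ∈ S) {x : ℕ} (hmax : ∀ b ∈ S, b < x) :
    buildSet p (insert x S) = replayInsert (p x) x (buildSet p S) := by
  rw [buildSet_insert_of_forall_lt p hmax, replayInsert_eq_insertAfter]
  intro b hb
  rcases (mem_buildSet hlt hcl).1 hb with rfl | hb
  · exact Nat.zero_le x
  · exact (hmax b hb).le

theorem buildSet_insert_eq_replayInsert {S : Finset ℕ} (hlt : ∀ i ∈ S, p i < i)
    (hcl : ∀ i ∈ S, p i = 0 ∨ p i ∈ S) {x : ℕ} (hxS : x ∉ S) (hx : p x < x) :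
    buildSet p (insert x S) = replayInsert (p x) x (buildSet p S) := by
  induction S using Finset.induction_on_max with
  | empty => exact buildSet_insert_eq_replayInsert_of_forall_lt hlt hcl (by simp)
  | insert m S hmax ih =>
    have hne : x ≠ m := fun h => hxS (h ▸ Finset.mem_insert_self m S)
    rcases lt_or_gt_of_ne hne with hxm | hmx
    · have hcl' := parent_eq_zero_or_mem_of_insert_max hmax hlt hcl
      have hpm : p m ≠ x := by
        rcases hcl' m (Finset.mem_insert_self m S) with h | h
        · omega
        · exact fun e => hxS (Finset.mem_insert_of_mem (e ▸ h))
      have hmax' : ∀ b ∈ insert x S, b < m := by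
        simpa [hxm] using hmax
      rw [Finset.insert_comm, buildSet_insert_of_forall_lt p hmax',
        ih (fun i hi => hlt i (Finset.mem_insert_of_mem hi))
          (fun i hi => hcl' i (Finset.mem_insert_of_mem hi))
          (fun h => hxS (Finset.mem_insert_of_mem h)),
        buildSet_insert_of_forall_lt p hmax, replayInsert_insertAfter_comm (by omega) hpm hxm]
    · refine buildSet_insert_eq_replayInsert_of_forall_lt hlt hcl fun b hb => ?_
      rcases Finset.mem_insert.1 hb with rfl | hb
      · exact hmx
      · exact (hmax b hb).trans hmx

end buildSet

theorem replay_placement_larger_successor_general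
    (k : ℕ) (p : ℕ → ℕ) (hp : ∀ i, 1 ≤ i → i ≤ k → p i < i)
    (S : Finset ℕ) (hS : S ⊆ Finset.Icc 1 k)
    (hclosed : ∀ i ∈ S, p i = 0 ∨ p i ∈ S)
    (a : ℕ)
    (x : ℕ) (hx : x ∈ Finset.Icc 1 k) (hxS : x ∉ S) (hpx : p x = a)
    (u : List ℕ) (c : ℕ) (v' : List ℕ)
    (hsplit : buildSet p S = u ++ a :: c :: v') :
    buildSet p (insert x S) =
      u ++ a :: (c :: v').takeWhile (fun b => decide (x < b)) ++
        x :: (c :: v').dropWhile (fun b => decide (x < b)) := by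
  have hlt : ∀ i ∈ S, p i < i := fun i hi =>
    hp i (Finset.mem_Icc.1 (hS hi)).1 (Finset.mem_Icc.1 (hS hi)).2
  have hau : a ∉ u := by
    have hnodup := nodup_buildSet hlt hclosed
    rw [hsplit, List.nodup_middle, List.nodup_cons] at hnodup
    exact fun h => hnodup.1 (List.mem_append_left _ h)
  rw [buildSet_insert_eq_replayInsert hlt hclosed hxS
      (hp x (Finset.mem_Icc.1 hx).1 (Finset.mem_Icc.1 hx).2),
    hpx, hsplit, replayInsert_append_cons _ hau, insertByTS_eq_takeWhile_append_dropWhile,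
    List.append_assoc, List.cons_append]

/-- Replay placement when the successor has a larger timestamp: if the element
immediately following `a` in `build S` is greater than `a`, and `v` is the
portion of `build S` strictly after `a`, then in `build (S ∪ {x})` (for `x ∉ S`
with parent `a`) the element `x` occurs immediately after the block
`a :: v₁`, where `v₁` is the longest prefix of `v` all of whose entries exceed
`x`. -/
theorem replay_placement_larger_successor
    (k : ℕ) (p : ℕ → ℕ) (hp : ∀ i, 1 ≤ i → i ≤ k → p i < i)
    (S : Finset ℕ) (hS : S ⊆ Finset.Icc 1 k)
    (hclosed : ∀ i ∈ S, p i = 0 ∨ p i ∈ S)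
    (a : ℕ) (ha : a = 0 ∨ a ∈ S)
    (x : ℕ) (hx : x ∈ Finset.Icc 1 k) (hxS : x ∉ S) (hpx : p x = a)
    (u : List ℕ) (c : ℕ) (v' : List ℕ)
    (hsplit : buildSet p S = u ++ a :: c :: v') (hac : a < c) :
    buildSet p (insert x S) =
      u ++ a :: (c :: v').takeWhile (fun b => decide (x < b)) ++
        x :: (c :: v').dropWhile (fun b => decide (x < b)) :=
  replay_placement_larger_successor_general k p hp S hS hclosed a x hx hxS hpx u c v' hsplit
end
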